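/- Let Θ ∈ L^∞_loc(ℝ) such that Θ(t+0) and Θ(t-0) exist for all t, and let j(t) = ∫₀^t Θ(s) ds. Then the Clarke subdifferential of j at t equals the interval [Θ̲(t), Θ̄(t)], where Θ̲(t) = lim_{μ→0⁺} essinf_{|t-s|≤μ} Θ(s) and Θ̄(t) = lim_{μ→0⁺} esssup_{|t-s|≤μ} Θ(s). -/

import Mathlib

/-!
A function with one-sided limits everywhere is continuous off a countable set, hence measurable,
and locally integrable by the local bound. Near `t` it is close to `Θ(t-0)` on the left and to
`Θ(t+0)` on the right, so the essential infimum and supremum over `[t - μ, t + μ]` tend to the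
minimum and maximum of the two one-sided limits. The difference quotient of `j` at `(τ, r)` in
direction `d` is the average over `x ∈ (0, r)` of `Θ(τ + d x) d`; for `τ` near `t` and `r` small
this is at most `max (Θ(t-0) d) (Θ(t+0) d)` up to `ε`, with near equality for segments placed on the
corresponding side of `t`. Hence `j°(t; d) = max (Θ(t-0) d) (Θ(t+0) d)`, and the `ξ` with
`ξ d ≤ j°(t; d)` for all `d` form the interval between `Θ(t-0)` and `Θ(t+0)`.
-/

open MeasureTheory Set Filter

/-- The Clarke generalized directional derivative of `j` at `t` in direction `d`. -/
noncomputable def clarkeDeriv (j : ℝ → ℝ) (t d : ℝ) : ℝ :=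
  Filter.limsup (fun p : ℝ × ℝ => (j (p.1 + p.2 * d) - j p.1) / p.2)
    ((nhds t) ×ˢ (nhdsWithin 0 (Set.Ioi 0)))

/-- The Clarke subdifferential of `j : ℝ → ℝ` at `t`. -/
def clarkeSubdiff (j : ℝ → ℝ) (t : ℝ) : Set ℝ :=
  {ξ : ℝ | ∀ d : ℝ, ξ * d ≤ clarkeDeriv j t d}

open Topology

lemma Filter.limsup_mem_Icc {α β : Type*} [ConditionallyCompleteLinearOrder β] {l : Filter α}
    {u : α → β} {a b : β} (ha : ∃ᶠ x in l, a ≤ u x) (hb : ∀ᶠ x in l, u x ≤ b) :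
    limsup u l ∈ Icc a b :=
  ⟨le_limsup_of_frequently_le ha ⟨b, hb⟩, limsup_le_of_le (.of_frequently_ge ha) hb⟩

lemma Filter.limsup_eq_of_frequently_of_eventually {α β : Type*}
    [ConditionallyCompleteLinearOrder β] [DenselyOrdered β] [NoMaxOrder β] [NoMinOrder β]
    {l : Filter α} {u : α → β} {c : β} (hlow : ∀ y < c, ∃ᶠ x in l, y ≤ u x)
    (hup : ∀ z > c, ∀ᶠ x in l, u x ≤ z) : limsup u l = c := by
  obtain ⟨y, hy⟩ := exists_lt c
  obtain ⟨z, hz⟩ := exists_gt c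
  exact le_antisymm
    (le_of_forall_gt_imp_ge_of_dense fun z' hz' => (limsup_mem_Icc (hlow y hy) (hup z' hz')).2)
    (le_of_forall_lt_imp_le_of_dense fun y' hy' => (limsup_mem_Icc (hlow y' hy') (hup z hz)).1)

section Regulated

variable {α E : Type*} [TopologicalSpace α] [PseudoMetricSpace E] {f : α → E}

lemma eventually_nhdsWithin_eventually_dist_lt {s : Set α} (hs : IsOpen s) {x : α} {L : E}
    (hf : Tendsto f (𝓝[s] x) (𝓝 L)) {ε : ℝ} (hε : 0 < ε) :
    ∀ᶠ y in 𝓝[s] x, ∀ᶠ p in 𝓝 y ×ˢ 𝓝 y, dist (f p.1) (f p.2) < ε := by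
  have hclose :=
    eventually_eventually_nhdsWithin.2 (Metric.tendsto_nhds.1 hf (ε / 2) (half_pos hε))
  filter_upwards [hclose, self_mem_nhdsWithin] with y hy hys
  rw [hs.nhdsWithin_eq hys] at hy
  filter_upwards [hy.prod_mk hy] with p hp
  linarith [dist_triangle_right (f p.1) (f p.2) L, hp.1, hp.2]

lemma Set.Countable.of_forall_eventually_nhdsNE_notMem [HereditarilyLindelofSpace α] {S : Set α}
    (h : ∀ x, ∀ᶠ y in 𝓝[≠] x, y ∉ S) : S.Countable :=
  (HereditarilyLindelofSpace.isLindelof S).countable_of_isDiscrete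
    (isDiscrete_iff_nhdsNE.2 fun x _ => inf_principal_eq_bot.2 (h x))

lemma continuousAt_of_forall_eventually_dist_lt {x : α}
    (h : ∀ ε > 0, ∀ᶠ p in 𝓝 x ×ˢ 𝓝 x, dist (f p.1) (f p.2) < ε) : ContinuousAt f x :=
  Metric.tendsto_nhds.2 fun ε hε => (h ε hε).curry.mono fun _ hy => hy.self_of_nhds

variable [LinearOrder α] [OrderTopology α] [SecondCountableTopology α]

theorem countable_setOf_not_continuousAt_of_tendsto_nhdsLT_nhdsGT
    (hR : ∀ x, ∃ L, Tendsto f (𝓝[>] x) (𝓝 L)) (hL : ∀ x, ∃ L, Tendsto f (𝓝[<] x) (𝓝 L)) :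
    {x | ¬ContinuousAt f x}.Countable := by
  -- The points of oscillation `≥ ε` are isolated: on each side of any point, `f` is eventually
  -- `ε / 2`-close to its one-sided limit.
  have hosc : ∀ ε > 0, {x | ¬∀ᶠ p in 𝓝 x ×ˢ 𝓝 x, dist (f p.1) (f p.2) < ε}.Countable := by
    intro ε hε
    refine Set.Countable.of_forall_eventually_nhdsNE_notMem fun x => ?_
    obtain ⟨LR, hLR⟩ := hR x
    obtain ⟨LL, hLL⟩ := hL x
    rw [← nhdsLT_sup_nhdsGT, eventually_sup]
    simp only [mem_ofPred_eq, not_not]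
    exact ⟨eventually_nhdsWithin_eventually_dist_lt isOpen_Iio hLL hε,
      eventually_nhdsWithin_eventually_dist_lt isOpen_Ioi hLR hε⟩
  refine (countable_iUnion fun n : ℕ => hosc (1 / (n + 1)) Nat.one_div_pos_of_nat).mono ?_
  intro x hx
  simp only [mem_iUnion, mem_ofPred_eq]
  by_contra! hsmall
  refine hx (continuousAt_of_forall_eventually_dist_lt fun ε hε => ?_)
  obtain ⟨n, hn⟩ := exists_nat_one_div_lt hε
  exact (hsmall n).mono fun p hp => hp.trans hn

end Regulated

lemma locallyIntegrable_of_ae_abs_le {X : Type*} [MeasurableSpace X] [TopologicalSpace X]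
    [OpensMeasurableSpace X] [T2Space X] [LocallyCompactSpace X] {μ : Measure X}
    [IsFiniteMeasureOnCompacts μ] {f : X → ℝ} (hf : AEStronglyMeasurable f μ)
    (hbound : ∀ K, IsCompact K → ∃ C, ∀ᵐ x ∂μ, x ∈ K → |f x| ≤ C) : LocallyIntegrable f μ := by
  refine locallyIntegrable_iff.2 fun K hK => ?_
  obtain ⟨C, hC⟩ := hbound K hK
  exact Measure.integrableOn_of_bounded hK.measure_lt_top.ne hf
    ((ae_restrict_iff' hK.measurableSet).2 hC)

lemma MeasureTheory.LocallyIntegrable.intervalIntegrable_comp_add_mul {E : Type*}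
    [NormedAddCommGroup E] {f : ℝ → E} (hf : LocallyIntegrable f volume) (τ d a b : ℝ) :
    IntervalIntegrable (fun x => f (τ + d * x)) volume a b := by
  rcases eq_or_ne d 0 with rfl | hd
  · simp
  have hshift : IntervalIntegrable (fun y => f (τ + y)) volume (d * a) (d * b) := by
    simpa using ((hf.integrableOn_isCompact isCompact_uIcc).intervalIntegrable
      (a := τ + d * a) (b := τ + d * b)).comp_add_left τ
  simpa [hd] using hshift.comp_mul_left (c := d)

lemma eventually_ae_restrict_Icc_of_eventually_nhdsNE {t : ℝ} {p : ℝ → Prop}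
    (h : ∀ᶠ s in 𝓝[≠] t, p s) :
    ∀ᶠ μ in 𝓝[>] 0, ∀ᵐ s ∂volume.restrict (Icc (t - μ) (t + μ)), p s := by
  obtain ⟨δ, hδ, hball⟩ := Metric.eventually_nhds_iff.1 (eventually_nhdsWithin_iff.1 h)
  filter_upwards [Ioo_mem_nhdsGT hδ] with μ hμ
  rw [ae_restrict_iff' measurableSet_Icc]
  filter_upwards [measure_eq_zero_iff_ae_notMem.1 (measure_singleton t)] with s hst hs
  refine hball ?_ hst
  rw [Real.dist_eq, abs_lt]
  constructor <;> linarith [hs.1, hs.2, hμ.2]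

lemma frequently_ae_restrict_of_forall_mem_Ioo {V : Set ℝ} {a b : ℝ} {p : ℝ → Prop}
    (hab : a < b) (hV : Ioo a b ⊆ V) (h : ∀ s ∈ Ioo a b, p s) :
    ∃ᶠ s in ae (volume.restrict V), p s := by
  have : NeBot (ae (volume.restrict (Ioo a b))) := ae_neBot.2 (by simp [hab])
  exact ((ae_restrict_iff' measurableSet_Ioo).2 (ae_of_all _ h)).frequently.filter_mono
    (ae_mono (Measure.restrict_mono hV le_rfl))

section EssSup

variable {β : Type*} [ConditionallyCompleteLinearOrder β] [TopologicalSpace β] [OrderTopology β]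
  [DenselyOrdered β] [NoMaxOrder β] [NoMinOrder β] {f : ℝ → β} {t : ℝ} {LM LP : β}

theorem tendsto_essSup_restrict_Icc (hP : Tendsto f (𝓝[>] t) (𝓝 LP))
    (hM : Tendsto f (𝓝[<] t) (𝓝 LM)) :
    Tendsto (fun μ => essSup f (volume.restrict (Icc (t - μ) (t + μ)))) (𝓝[>] 0)
      (𝓝 (max LM LP)) := by
  have upper : ∀ b > max LM LP, ∀ᶠ μ in 𝓝[>] 0,
      ∀ᵐ s ∂volume.restrict (Icc (t - μ) (t + μ)), f s ≤ b := by
    intro b hb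
    refine eventually_ae_restrict_Icc_of_eventually_nhdsNE ?_
    rw [← nhdsLT_sup_nhdsGT, eventually_sup]
    exact ⟨hM.eventually (ge_mem_nhds (max_lt_iff.1 hb).1),
      hP.eventually (ge_mem_nhds (max_lt_iff.1 hb).2)⟩
  have lower : ∀ a < max LM LP, ∀ᶠ μ in 𝓝[>] 0,
      ∃ᶠ s in ae (volume.restrict (Icc (t - μ) (t + μ))), a ≤ f s := by
    intro a ha
    filter_upwards [self_mem_nhdsWithin] with μ (hμ : 0 < μ)
    rcases lt_max_iff.1 ha with h | h
    · obtain ⟨c, hc, hsub⟩ := mem_nhdsLT_iff_exists_Ioo_subset.1 (hM.eventually (le_mem_nhds h))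
      refine frequently_ae_restrict_of_forall_mem_Ioo (a := max c (t - μ)) (b := t)
        (max_lt hc (by linarith)) (fun s hs => ⟨(le_max_right _ _).trans hs.1.le, by
          linarith [hs.2]⟩) fun s hs => hsub ⟨(le_max_left _ _).trans_lt hs.1, hs.2⟩
    · obtain ⟨c, hc, hsub⟩ := mem_nhdsGT_iff_exists_Ioo_subset.1 (hP.eventually (le_mem_nhds h))
      refine frequently_ae_restrict_of_forall_mem_Ioo (a := t) (b := min c (t + μ))
        (lt_min hc (by linarith)) (fun s hs => ⟨by linarith [hs.1],
          hs.2.le.trans (min_le_right _ _)⟩)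
        fun s hs => hsub ⟨hs.1, hs.2.trans_le (min_le_left _ _)⟩
  rw [tendsto_order]
  constructor
  · intro a ha
    obtain ⟨a', haa', ha'⟩ := exists_between ha
    obtain ⟨b, hb⟩ := exists_gt (max LM LP)
    filter_upwards [lower a' ha', upper b hb] with μ hfreq hev
    exact haa'.trans_le (limsup_mem_Icc hfreq hev).1
  · intro b hb
    obtain ⟨b', hb', hbb'⟩ := exists_between hb
    obtain ⟨a, ha⟩ := exists_lt (max LM LP)
    filter_upwards [lower a ha, upper b' hb'] with μ hfreq hev
    exact (limsup_mem_Icc hfreq hev).2.trans_lt hbb'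

theorem tendsto_essInf_restrict_Icc (hP : Tendsto f (𝓝[>] t) (𝓝 LP))
    (hM : Tendsto f (𝓝[<] t) (𝓝 LM)) :
    Tendsto (fun μ => essInf f (volume.restrict (Icc (t - μ) (t + μ)))) (𝓝[>] 0)
      (𝓝 (min LM LP)) :=
  tendsto_essSup_restrict_Icc (β := βᵒᵈ) hP hM

end EssSup

lemma integral_div_le_of_ae_le {f : ℝ → ℝ} {r y : ℝ} (hr : 0 < r)
    (hf : IntervalIntegrable f volume 0 r) (h : ∀ᵐ x, x ∈ Ioo 0 r → f x ≤ y) :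
    (∫ x in 0..r, f x) / r ≤ y := by
  have hle : ∫ x in 0..r, f x ≤ ∫ _ in 0..r, y :=
    intervalIntegral.integral_mono_ae_restrict hr.le hf intervalIntegrable_const <| by
      rwa [← Measure.restrict_congr_set Ioo_ae_eq_Icc, EventuallyLE,
        ae_restrict_iff' measurableSet_Ioo]
  rw [div_le_iff₀ hr]
  simpa [mul_comm] using hle

lemma le_integral_div_of_ae_le {f : ℝ → ℝ} {r y : ℝ} (hr : 0 < r)
    (hf : IntervalIntegrable f volume 0 r) (h : ∀ᵐ x, x ∈ Ioo 0 r → y ≤ f x) :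
    y ≤ (∫ x in 0..r, f x) / r := by
  have := integral_div_le_of_ae_le (f := fun x => -f x) hr hf.neg
    (h.mono fun x hx hmem => neg_le_neg (hx hmem))
  rw [intervalIntegral.integral_neg, neg_div] at this
  linarith

lemma ae_add_mul_ne {d : ℝ} (hd : d ≠ 0) (τ t : ℝ) : ∀ᵐ x ∂volume, τ + d * x ≠ t := by
  refine measure_mono_null (fun x (hx : ¬τ + d * x ≠ t) => ?_) (measure_singleton ((t - τ) / d))
  rw [not_ne_iff] at hx
  rw [mem_singleton_iff, eq_div_iff hd]
  linarith

section Clarke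

variable {Θ : ℝ → ℝ} {t d y LM LP : ℝ}

lemma integral_sub_integral_eq_integral_comp (hΘ : LocallyIntegrable Θ volume) (τ r d : ℝ) :
    (∫ s in 0..τ + r * d, Θ s) - ∫ s in 0..τ, Θ s = ∫ x in 0..r, Θ (τ + d * x) * d := by
  rw [intervalIntegral.integral_interval_sub_left
    (hΘ.integrableOn_isCompact isCompact_uIcc).intervalIntegrable
    (hΘ.integrableOn_isCompact isCompact_uIcc).intervalIntegrable,
    intervalIntegral.integral_mul_const, mul_comm (∫ x in (0 : ℝ)..r, Θ (τ + d * x)),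
    intervalIntegral.mul_integral_comp_add_mul, mul_zero, add_zero, mul_comm d]

lemma eventually_integral_comp_div_le (hΘ : LocallyIntegrable Θ volume) (hd : d ≠ 0)
    (hy : ∀ᶠ s in 𝓝[≠] t, Θ s * d < y) :
    ∀ᶠ p : ℝ × ℝ in 𝓝 t ×ˢ 𝓝[>] 0, (∫ x in 0..p.2, Θ (p.1 + d * x) * d) / p.2 ≤ y := by
  obtain ⟨δ, hδ, hball⟩ := Metric.eventually_nhds_iff.1 (eventually_nhdsWithin_iff.1 hy)
  have hd' : 0 < |d| := abs_pos.2 hd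
  filter_upwards [prod_mem_prod (Metric.ball_mem_nhds t (half_pos hδ))
    (Ioo_mem_nhdsGT (div_pos (half_pos hδ) hd'))] with p ⟨hτ, hr⟩
  refine integral_div_le_of_ae_le hr.1
    ((hΘ.intervalIntegrable_comp_add_mul _ _ _ _).mul_const d) ?_
  -- the segment stays in the punctured ball, except where it passes through `t`
  filter_upwards [ae_add_mul_ne hd p.1 t] with x hne hx
  have hstep : |d * x| < δ / 2 := by
    rw [abs_mul, abs_of_pos hx.1]
    calc |d| * x < |d| * (δ / 2 / |d|) := mul_lt_mul_of_pos_left (hx.2.trans hr.2) hd'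
      _ = δ / 2 := mul_div_cancel₀ _ hd'.ne'
  refine (hball ?_ hne).le
  rw [Metric.mem_ball, Real.dist_eq] at hτ
  rw [Real.dist_eq, add_sub_right_comm]
  linarith [abs_add_le (p.1 - t) (d * x)]

lemma frequently_le_integral_comp_div (hΘ : LocallyIntegrable Θ volume) {τ : ℝ → ℝ}
    (hτ : Tendsto τ (𝓝[>] 0) (𝓝 t))
    (hy : ∀ᶠ r in 𝓝[>] 0, ∀ x ∈ Ioo 0 r, y ≤ Θ (τ r + d * x) * d) :
    ∃ᶠ p : ℝ × ℝ in 𝓝 t ×ˢ 𝓝[>] 0, y ≤ (∫ x in 0..p.2, Θ (p.1 + d * x) * d) / p.2 := by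
  refine (hτ.prodMk tendsto_id).frequently (Eventually.frequently ?_)
  filter_upwards [hy, self_mem_nhdsWithin] with r hr (hr0 : 0 < r)
  exact le_integral_div_of_ae_le hr0
    ((hΘ.intervalIntegrable_comp_add_mul _ _ _ _).mul_const d) (ae_of_all _ hr)

lemma abs_mul_lt_of_mem_Ioo {x r : ℝ} (hd : d ≠ 0) (hx : x ∈ Ioo 0 r) : |d * x| < r * |d| := by
  rw [abs_mul, abs_of_pos hx.1, mul_comm r]
  exact mul_lt_mul_of_pos_left hx.2 (abs_pos.2 hd)

lemma frequently_le_integral_comp_div_of_lt_right (hΘ : LocallyIntegrable Θ volume) (hd : d ≠ 0)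
    (hP : Tendsto Θ (𝓝[>] t) (𝓝 LP)) (hy : y < LP * d) :
    ∃ᶠ p : ℝ × ℝ in 𝓝 t ×ˢ 𝓝[>] 0, y ≤ (∫ x in 0..p.2, Θ (p.1 + d * x) * d) / p.2 := by
  obtain ⟨c, hc, hsub⟩ :=
    mem_nhdsGT_iff_exists_Ioo_subset.1 ((hP.mul_const d).eventually (le_mem_nhds hy))
  have hd' : 0 < |d| := abs_pos.2 hd
  -- Segments starting at `t + r * |d|` lie in `(t, t + 2 * r * |d|)`, whatever the sign of `d`.
  refine frequently_le_integral_comp_div hΘ (τ := fun r => t + r * |d|) ?_ ?_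
  · exact (Continuous.tendsto' (by fun_prop) 0 t (by simp)).mono_left nhdsWithin_le_nhds
  filter_upwards [Ioo_mem_nhdsGT (div_pos (sub_pos.2 (mem_Ioi.1 hc)) (mul_pos two_pos hd'))]
    with r hr x hx
  have hstep := abs_lt.1 (abs_mul_lt_of_mem_Ioo hd hx)
  have hr' : r * (2 * |d|) < c - t := (lt_div_iff₀ (mul_pos two_pos hd')).1 hr.2
  exact hsub ⟨by linarith, by linarith⟩

lemma frequently_le_integral_comp_div_of_lt_left (hΘ : LocallyIntegrable Θ volume) (hd : d ≠ 0)
    (hM : Tendsto Θ (𝓝[<] t) (𝓝 LM)) (hy : y < LM * d) :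
    ∃ᶠ p : ℝ × ℝ in 𝓝 t ×ˢ 𝓝[>] 0, y ≤ (∫ x in 0..p.2, Θ (p.1 + d * x) * d) / p.2 := by
  obtain ⟨c, hc, hsub⟩ :=
    mem_nhdsLT_iff_exists_Ioo_subset.1 ((hM.mul_const d).eventually (le_mem_nhds hy))
  have hd' : 0 < |d| := abs_pos.2 hd
  refine frequently_le_integral_comp_div hΘ (τ := fun r => t - r * |d|) ?_ ?_
  · exact (Continuous.tendsto' (by fun_prop) 0 t (by simp)).mono_left nhdsWithin_le_nhds
  filter_upwards [Ioo_mem_nhdsGT (div_pos (sub_pos.2 (mem_Iio.1 hc)) (mul_pos two_pos hd'))]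
    with r hr x hx
  have hstep := abs_lt.1 (abs_mul_lt_of_mem_Ioo hd hx)
  have hr' : r * (2 * |d|) < t - c := (lt_div_iff₀ (mul_pos two_pos hd')).1 hr.2
  exact hsub ⟨by linarith, by linarith⟩

theorem clarkeDeriv_integral_eq (hΘ : LocallyIntegrable Θ volume)
    (hP : Tendsto Θ (𝓝[>] t) (𝓝 LP)) (hM : Tendsto Θ (𝓝[<] t) (𝓝 LM)) (d : ℝ) :
    clarkeDeriv (fun x => ∫ s in 0..x, Θ s) t d = max (LM * d) (LP * d) := by
  rcases eq_or_ne d 0 with rfl | hd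
  · simp [clarkeDeriv]
  unfold clarkeDeriv
  simp_rw [integral_sub_integral_eq_integral_comp hΘ]
  refine limsup_eq_of_frequently_of_eventually (fun y hy => ?_) fun z hz => ?_
  · rcases lt_max_iff.1 hy with hy | hy
    · exact frequently_le_integral_comp_div_of_lt_left hΘ hd hM hy
    · exact frequently_le_integral_comp_div_of_lt_right hΘ hd hP hy
  · refine eventually_integral_comp_div_le hΘ hd ?_
    rw [← nhdsLT_sup_nhdsGT, eventually_sup]
    exact ⟨(hM.mul_const d).eventually (gt_mem_nhds (max_lt_iff.1 hz).1),
      (hP.mul_const d).eventually (gt_mem_nhds (max_lt_iff.1 hz).2)⟩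

end Clarke

lemma setOf_forall_mul_le_max_mul (a b : ℝ) :
    {ξ : ℝ | ∀ d, ξ * d ≤ max (a * d) (b * d)} = Icc (min a b) (max a b) := by
  ext ξ
  refine ⟨fun h => ⟨?_, by simpa using h 1⟩, fun ⟨hmin, hmax⟩ d => ?_⟩
  · have := h (-1)
    rw [mul_neg_one, mul_neg_one, mul_neg_one, max_neg_neg] at this
    exact neg_le_neg_iff.1 this
  rcases le_total 0 d with hd | hd
  · exact (mul_le_mul_of_nonneg_right hmax hd).trans (max_mul_of_nonneg _ _ hd).le
  · calc ξ * d ≤ min a b * d := mul_le_mul_of_nonpos_right hmin hd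
      _ = max (a * d) (b * d) := by
        simpa only [smul_eq_mul, mul_comm d] using smul_min_of_nonpos hd a b

theorem stmt_9 (Θ : ℝ → ℝ)
    (hloc : ∀ K : Set ℝ, IsCompact K → ∃ C : ℝ, ∀ᵐ t ∂volume, t ∈ K → |Θ t| ≤ C)
    (hlimR : ∀ t : ℝ, ∃ L : ℝ, Tendsto Θ (nhdsWithin t (Set.Ioi t)) (nhds L))
    (hlimL : ∀ t : ℝ, ∃ L : ℝ, Tendsto Θ (nhdsWithin t (Set.Iio t)) (nhds L))
    (ΘL ΘU : ℝ → ℝ)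
    (hΘL : ∀ t : ℝ, Tendsto
      (fun μ : ℝ => essInf Θ (volume.restrict (Set.Icc (t - μ) (t + μ))))
      (nhdsWithin 0 (Set.Ioi 0)) (nhds (ΘL t)))
    (hΘU : ∀ t : ℝ, Tendsto
      (fun μ : ℝ => essSup Θ (volume.restrict (Set.Icc (t - μ) (t + μ))))
      (nhdsWithin 0 (Set.Ioi 0)) (nhds (ΘU t)))
    (t : ℝ) :
    clarkeSubdiff (fun x : ℝ => ∫ s in (0:ℝ)..x, Θ s) t = Set.Icc (ΘL t) (ΘU t) := by
  have hΘ : LocallyIntegrable Θ volume :=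
    locallyIntegrable_of_ae_abs_le (measurable_of_countable_not_continuousAt
      (countable_setOf_not_continuousAt_of_tendsto_nhdsLT_nhdsGT hlimR hlimL)).aestronglyMeasurable
      hloc
  obtain ⟨LP, hP⟩ := hlimR t
  obtain ⟨LM, hM⟩ := hlimL t
  rw [tendsto_nhds_unique (hΘL t) (tendsto_essInf_restrict_Icc hP hM),
    tendsto_nhds_unique (hΘU t) (tendsto_essSup_restrict_Icc hP hM),
    ← setOf_forall_mul_le_max_mul]
  simp_rw [clarkeSubdiff, clarkeDeriv_integral_eq hΘ hP hM]
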